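/- arXiv:2209.15473 — 4 statements merged into one kernel-verified Lean document; each statement's English description precedes it below -/
import Mathlib

section
/- Let g, h : ℝ^d → ℝ^t (with 1 ≤ t < d) be continuously differentiable functions having the same zero level set M := g⁻¹({0}) = h⁻¹({0}). Let θ₀ ∈ M, let G := Jg(θ₀) and H := Jh(θ₀) be the Jacobian matrices of g and h at θ₀, and suppose both have full row rank t (equivalently G·Gᵀ and H·Hᵀ are invertible). Then the Schay projection matrices coincide: I_d − Gᵀ(G·Gᵀ)⁻¹G = I_d − Hᵀ(H·Hᵀ)⁻¹H. (This is the paper's Lemma 1: the constrained generalized fiducial density is invariant to the form of the constraint function, since the two densities differ only through these projection matrices.) -/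
open Matrix

/-- The Jacobian matrix (in the standard bases) of a map `ℝ^d → ℝ^t` at a point. -/
noncomputable def jacobianMatrix {d t : ℕ} (g : (Fin d → ℝ) → (Fin t → ℝ))
    (θ : Fin d → ℝ) : Matrix (Fin t) (Fin d) ℝ :=
  fun i j => fderiv ℝ g θ (Pi.single j 1) i

/-- The Schay projection matrix `I − Aᵀ(AAᵀ)⁻¹A` associated to a full-row-rank matrix. -/
noncomputable def schayProjection {d t : ℕ} (A : Matrix (Fin t) (Fin d) ℝ) :
    Matrix (Fin d) (Fin d) ℝ :=
  1 - Aᵀ * (A * Aᵀ)⁻¹ * A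

/-! `P(A)` is the orthogonal projection onto `ker A`, and `ker A` is all it depends on. The implicit
function theorem parametrises the zero set of `g` near `θ₀` by `ker Jg(θ₀)`; as `h` vanishes on
that parametrisation, `ker Jg(θ₀) ⊆ ker Jh(θ₀)`, and symmetrically. -/

theorem Matrix.mulVec_surjective_of_isUnit_mul_transpose {R m n : Type*} [CommRing R]
    [Fintype m] [DecidableEq m] [Fintype n] {A : Matrix m n R} (hA : IsUnit (A * Aᵀ)) :
    Function.Surjective A.mulVec :=
  mulVec_surjective_iff_exists_right_inverse.mpr
    ⟨Aᵀ * (A * Aᵀ)⁻¹, by rw [← Matrix.mul_assoc, Matrix.mul_nonsing_inv _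
      ((isUnit_iff_isUnit_det _).mp hA)]⟩

section SchayProjection

variable {d t : ℕ} {A B : Matrix (Fin t) (Fin d) ℝ}

theorem mul_schayProjection (hA : IsUnit (A * Aᵀ)) : A * schayProjection A = 0 := by
  rw [schayProjection, Matrix.mul_sub, Matrix.mul_one, ← Matrix.mul_assoc, ← Matrix.mul_assoc,
    Matrix.mul_nonsing_inv _ ((isUnit_iff_isUnit_det _).mp hA), Matrix.one_mul, sub_self]

theorem one_sub_schayProjection : 1 - schayProjection A = Aᵀ * ((A * Aᵀ)⁻¹ * A) := by
  rw [schayProjection, sub_sub_cancel, Matrix.mul_assoc]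

theorem schayProjection_eq_of_ker_eq (hA : IsUnit (A * Aᵀ)) (hB : IsUnit (B * Bᵀ))
    (hker : ∀ v, A *ᵥ v = 0 ↔ B *ᵥ v = 0) : schayProjection A = schayProjection B := by
  refine ext_iff_mulVec.mpr fun v => sub_eq_zero.mp ?_
  set u := schayProjection A *ᵥ v - schayProjection B *ᵥ v with hu_def
  have hAu : A *ᵥ u = 0 := by
    have hBPB : B *ᵥ (schayProjection B *ᵥ v) = 0 := by
      rw [mulVec_mulVec, mul_schayProjection hB, zero_mulVec]
    rw [mulVec_sub, mulVec_mulVec, mul_schayProjection hA, zero_mulVec, (hker _).mpr hBPB,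
      sub_zero]
  have perp : ∀ (C : Matrix (Fin t) (Fin d) ℝ) x, C *ᵥ u = 0 → (Cᵀ *ᵥ x) ⬝ᵥ u = 0 :=
    fun C x hCu => by rw [mulVec_transpose, ← dotProduct_mulVec, hCu, dotProduct_zero]
  -- `u` lies in `ker A` and in `range Aᵀ + range Bᵀ = (ker A)ᗮ`.
  have hu : u = Bᵀ *ᵥ (((B * Bᵀ)⁻¹ * B) *ᵥ v) - Aᵀ *ᵥ (((A * Aᵀ)⁻¹ * A) *ᵥ v) := by
    rw [hu_def, mulVec_mulVec, mulVec_mulVec, ← one_sub_schayProjection,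
      ← one_sub_schayProjection, sub_mulVec, sub_mulVec]
    abel
  refine dotProduct_self_eq_zero.mp ?_
  nth_rw 1 [hu]
  rw [sub_dotProduct, perp A _ hAu, perp B _ ((hker u).mp hAu), sub_zero]

end SchayProjection

theorem HasStrictFDerivAt.ker_le_ker_of_preimage_subset {𝕜 E F G : Type*}
    [NontriviallyNormedField 𝕜] [CompleteSpace 𝕜] [NormedAddCommGroup E] [NormedSpace 𝕜 E]
    [CompleteSpace E] [NormedAddCommGroup F] [NormedSpace 𝕜 F] [FiniteDimensional 𝕜 F]
    [NormedAddCommGroup G] [NormedSpace 𝕜 G] {f : E → F} {f' : E →L[𝕜] F} {g : E → G}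
    {g' : E →L[𝕜] G} {a : E} (hf : HasStrictFDerivAt f f' a) (hf' : f'.range = ⊤)
    (hg : HasFDerivAt g g' a) (hfg : f ⁻¹' {f a} ⊆ g ⁻¹' {g a}) :
    f'.ker ≤ g'.ker := by
  set ψ := hf.implicitFunction f f' hf' (f a)
  have hψ : HasFDerivAt ψ f'.ker.subtypeL 0 := (hf.to_implicitFunction hf').hasFDerivAt
  have hψ_level : ∀ᶠ z in nhds 0, f (ψ z) = f a :=
    (Continuous.prodMk_right (f a)).tendsto' 0 _ rfl |>.eventually (hf.map_implicitFunction_eq hf')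
  have hgψ_const : g ∘ ψ =ᶠ[nhds 0] fun _ => g a :=
    hψ_level.mono fun z hz => hfg hz
  have hψ0 : ψ 0 = a := hf.implicitFunction_apply_image hf'
  have hg' : HasFDerivAt g g' (ψ 0) := hψ0 ▸ hg
  have hD : g'.comp f'.ker.subtypeL = 0 :=
    (hg'.comp 0 hψ).unique ((hasFDerivAt_const (g a) 0).congr_of_eventuallyEq hgψ_const)
  exact fun v hv => by simpa using congrArg (fun L => L ⟨v, hv⟩) hD

section Jacobian

variable {d t : ℕ} {g h : (Fin d → ℝ) → (Fin t → ℝ)} {θ : Fin d → ℝ}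

theorem jacobianMatrix_eq_toMatrix' :
    jacobianMatrix g θ = LinearMap.toMatrix' (fderiv ℝ g θ : (Fin d → ℝ) →ₗ[ℝ] Fin t → ℝ) :=
  rfl

theorem jacobianMatrix_mulVec (v : Fin d → ℝ) : jacobianMatrix g θ *ᵥ v = fderiv ℝ g θ v := by
  rw [jacobianMatrix_eq_toMatrix', LinearMap.toMatrix'_mulVec, ContinuousLinearMap.coe_coe]

theorem jacobianMatrix_mulVec_eq_zero_of_preimage_subset (hg : ContDiffAt ℝ 1 g θ)
    (hh : DifferentiableAt ℝ h θ) (hG : IsUnit (jacobianMatrix g θ * (jacobianMatrix g θ)ᵀ))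
    (hgh : g ⁻¹' {g θ} ⊆ h ⁻¹' {h θ}) {v : Fin d → ℝ} (hv : jacobianMatrix g θ *ᵥ v = 0) :
    jacobianMatrix h θ *ᵥ v = 0 := by
  have hsurj : (fderiv ℝ g θ).range = ⊤ := by
    refine LinearMap.range_eq_top.mpr fun y => ?_
    obtain ⟨x, hx⟩ := mulVec_surjective_of_isUnit_mul_transpose hG y
    exact ⟨x, by rw [ContinuousLinearMap.coe_coe, ← jacobianMatrix_mulVec, hx]⟩
  rw [jacobianMatrix_mulVec] at hv ⊢
  exact (hg.hasStrictFDerivAt one_ne_zero).ker_le_ker_of_preimage_subset hsurj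
    hh.hasFDerivAt hgh hv

end Jacobian

theorem schayProjection_independent_of_constraint_general
    {d t : ℕ}
    (g h : (Fin d → ℝ) → (Fin t → ℝ))
    (hg : ContDiff ℝ 1 g) (hh : ContDiff ℝ 1 h)
    (hlevel : g ⁻¹' {0} = h ⁻¹' {0})
    (θ₀ : Fin d → ℝ) (hθ₀ : θ₀ ∈ g ⁻¹' {0})
    (hG : IsUnit (jacobianMatrix g θ₀ * (jacobianMatrix g θ₀)ᵀ))
    (hH : IsUnit (jacobianMatrix h θ₀ * (jacobianMatrix h θ₀)ᵀ)) :
    schayProjection (jacobianMatrix g θ₀) = schayProjection (jacobianMatrix h θ₀) := by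
  have hgθ : g θ₀ = 0 := hθ₀
  have hhθ : h θ₀ = 0 := by rwa [hlevel] at hθ₀
  have hlevel_θ₀ : g ⁻¹' {g θ₀} = h ⁻¹' {h θ₀} := by rw [hgθ, hhθ, hlevel]
  refine schayProjection_eq_of_ker_eq hG hH fun v => ⟨fun hv => ?_, fun hv => ?_⟩
  · exact jacobianMatrix_mulVec_eq_zero_of_preimage_subset hg.contDiffAt
      (hh.differentiable one_ne_zero θ₀) hG hlevel_θ₀.subset hv
  · exact jacobianMatrix_mulVec_eq_zero_of_preimage_subset hh.contDiffAt
      (hg.differentiable one_ne_zero θ₀) hH hlevel_θ₀.symm.subset hv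

/-- paper's Lemma 1: if two C¹ constraint functions `g, h : ℝ^d → ℝ^t`
have the same zero level set and their Jacobians at `θ₀` have full row rank
(equivalently, `G·Gᵀ` and `H·Hᵀ` are invertible), then the Schay projection matrices
at `θ₀` coincide. -/
theorem schayProjection_independent_of_constraint
    {d t : ℕ} (ht : 1 ≤ t) (htd : t < d)
    (g h : (Fin d → ℝ) → (Fin t → ℝ))
    (hg : ContDiff ℝ 1 g) (hh : ContDiff ℝ 1 h)
    (hlevel : g ⁻¹' {0} = h ⁻¹' {0})
    (θ₀ : Fin d → ℝ) (hθ₀ : θ₀ ∈ g ⁻¹' {0})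
    (hG : IsUnit (jacobianMatrix g θ₀ * (jacobianMatrix g θ₀)ᵀ))
    (hH : IsUnit (jacobianMatrix h θ₀ * (jacobianMatrix h θ₀)ᵀ)) :
    schayProjection (jacobianMatrix g θ₀) = schayProjection (jacobianMatrix h θ₀) :=
  schayProjection_independent_of_constraint_general g h hg hh hlevel θ₀ hθ₀ hG hH
end

section
/- Let J be a real n×d matrix, let N be a real d×k matrix whose columns are linearly independent, and let Q be a real d×k matrix with QᵀQ = I_k whose column space equals the column space of N. Then det(Nᵀ·Jᵀ·J·N) = det(Qᵀ·Jᵀ·J·Q) · det(NᵀN). -/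
/-!
Since the columns of `N` lie in the column space of `Q` and `QᵀQ = 1`, `QQᵀ` fixes them, so
`N = QC` with `C = QᵀN` square. Then `NᵀJᵀJN = Cᵀ(QᵀJᵀJQ)C` and `NᵀN = CᵀC`, and both sides
equal `det(QᵀJᵀJQ) · det(C)²`.
-/

open Matrix

namespace Matrix

variable {R : Type*} {m k l : Type*} [Fintype m] [Fintype k] [DecidableEq k]

theorem mul_transpose_mul_of_span_col_le [CommSemiring R] [Fintype l] [DecidableEq l]
    {Q : Matrix m k R} {N : Matrix m l R} (hQ : Qᵀ * Q = 1)
    (hN : Submodule.span R (Set.range N.col) ≤ Submodule.span R (Set.range Q.col)) :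
    Q * (Qᵀ * N) = N := by
  refine ext_of_mulVec_single fun j => ?_
  obtain ⟨c, hc⟩ : N.col j ∈ LinearMap.range Q.mulVecLin :=
    Q.range_mulVecLin ▸ hN (Submodule.subset_span ⟨j, rfl⟩)
  rw [← mulVec_mulVec, ← mulVec_mulVec, mulVec_single_one, ← hc, mulVecLin_apply,
    mulVec_mulVec c, hQ, one_mulVec]

theorem det_transpose_mul_mul_of_transpose_mul_self_eq_one [CommRing R] {Q : Matrix m k R}
    (hQ : Qᵀ * Q = 1) (A : Matrix m m R) (C : Matrix k k R) :
    ((Q * C)ᵀ * A * (Q * C)).det = (Qᵀ * A * Q).det * ((Q * C)ᵀ * (Q * C)).det := by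
  have hgram : (Q * C)ᵀ * (Q * C) = Cᵀ * C := by
    rw [transpose_mul, Matrix.mul_assoc, ← Matrix.mul_assoc Qᵀ, hQ, Matrix.one_mul]
  have hconj : (Q * C)ᵀ * A * (Q * C) = Cᵀ * (Qᵀ * A * Q) * C := by
    simp only [transpose_mul, Matrix.mul_assoc]
  rw [hgram, hconj, det_mul, det_mul, det_mul]
  ring

end Matrix

theorem det_gram_factorization_general
    {n d k : ℕ}
    (J : Matrix (Fin n) (Fin d) ℝ)
    (N : Matrix (Fin d) (Fin k) ℝ)
    (Q : Matrix (Fin d) (Fin k) ℝ)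
    (hQ : Qᵀ * Q = 1)
    (hspan : Submodule.span ℝ (Set.range (fun j : Fin k => (fun i : Fin d => Q i j)))
      = Submodule.span ℝ (Set.range (fun j : Fin k => (fun i : Fin d => N i j)))) :
    (Nᵀ * Jᵀ * J * N).det = (Qᵀ * Jᵀ * J * Q).det * (Nᵀ * N).det := by
  have hN : Q * (Qᵀ * N) = N := mul_transpose_mul_of_span_col_le hQ hspan.ge
  simpa only [hN, Matrix.mul_assoc] using
    det_transpose_mul_mul_of_transpose_mul_self_eq_one hQ (Jᵀ * J) (Qᵀ * N)

/-- if `N` is a `d×k` matrix with linearly independent columns and `Q` is a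
`d×k` matrix with orthonormal columns (`QᵀQ = I`) spanning the same column space as `N`,
then for any `n×d` matrix `J`,
`det(NᵀJᵀJN) = det(QᵀJᵀJQ) · det(NᵀN)`. -/
theorem det_gram_factorization
    {n d k : ℕ}
    (J : Matrix (Fin n) (Fin d) ℝ)
    (N : Matrix (Fin d) (Fin k) ℝ)
    (hN : LinearIndependent ℝ (fun j : Fin k => (fun i : Fin d => N i j)))
    (Q : Matrix (Fin d) (Fin k) ℝ)
    (hQ : Qᵀ * Q = 1)
    (hspan : Submodule.span ℝ (Set.range (fun j : Fin k => (fun i : Fin d => Q i j)))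
      = Submodule.span ℝ (Set.range (fun j : Fin k => (fun i : Fin d => N i j)))) :
    (Nᵀ * Jᵀ * J * N).det = (Qᵀ * Jᵀ * J * Q).det * (Nᵀ * N).det :=
  det_gram_factorization_general J N Q hQ hspan
end

section
/- Let g : ℝ^{d−t} × ℝ^t → ℝ^t be continuously differentiable, let U ⊆ ℝ^{d−t} be open, let φ : U → ℝ^t be continuously differentiable with g(u, φ(u)) = 0 for all u ∈ U, and suppose the partial derivative ∂₂g is invertible at ι(u) := (u, φ(u)) for every u ∈ U. Let f : ℝ^d → [0,∞) be measurable, let J : ℝ^d → (real n×d matrices) be any function (the Jacobian of the data generating algorithm θ ↦ A(w,θ)), let N(u) denote the d×(d−t) Jacobian matrix of ι at u, and for each u ∈ U let Q(u) be a real d×(d−t) matrix with Q(u)ᵀQ(u) = I whose columns form a basis of the null space of the Jacobian matrix of g at ι(u). Then for every u ∈ U, f(ι(u)) · det(Q(u)ᵀ·J(ι(u))ᵀ·J(ι(u))·Q(u))^{1/2} · det(N(u)ᵀN(u))^{1/2} = f(ι(u)) · det((J(ι(u))·N(u))ᵀ·(J(ι(u))·N(u)))^{1/2}; consequently, for every measurable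 set M ⊆ U, the Lebesgue integrals over M of the two sides agree: ∫_M f(ι(u)) det(QᵀJᵀJQ)^{1/2} det(NᵀN)^{1/2} du = ∫_M f(ι(u)) det((J·N)ᵀ(J·N))^{1/2} du. -/
/-!
Differentiating `g ∘ ι = 0` gives `G N = 0` for the Jacobians `G` of `g` and `N` of `ι`, so the
columns of `N` lie in `ker G`, the column space of `Q`. As `Qᵀ Q = 1`, this means `N = Q C` with
`C = Qᵀ N` square; hence `Nᵀ N = Cᵀ C` and `(J N)ᵀ (J N) = Cᵀ (Qᵀ Jᵀ J Q) C`, and taking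
determinants `det ((J N)ᵀ (J N)) = det (Qᵀ Jᵀ J Q) · det (Nᵀ N)`.
-/

open Matrix MeasureTheory

/-- The Jacobian matrix (standard bases) of a map `ℝ^{(d−t)+t} → ℝ^t`, the ambient
coordinates being indexed by `Fin (d−t) ⊕ Fin t`. -/
noncomputable def constraintJacobian {d t : ℕ}
    (g : ((Fin (d - t) ⊕ Fin t) → ℝ) → (Fin t → ℝ))
    (θ : (Fin (d - t) ⊕ Fin t) → ℝ) : Matrix (Fin t) (Fin (d - t) ⊕ Fin t) ℝ :=
  fun i j => fderiv ℝ g θ (Pi.single j 1) i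

/-- The graph map `ι(u) = (u, φ(u))` of an implicit function, written in the ambient
coordinates `Fin (d−t) ⊕ Fin t`. -/
def graphMap {d t : ℕ} (φ : (Fin (d - t) → ℝ) → (Fin t → ℝ))
    (u : Fin (d - t) → ℝ) : (Fin (d - t) ⊕ Fin t) → ℝ :=
  Sum.elim u (φ u)

/-- The `d×(d−t)` Jacobian matrix of the graph map `ι` at `u`. -/
noncomputable def graphJacobian {d t : ℕ} (φ : (Fin (d - t) → ℝ) → (Fin t → ℝ))
    (u : Fin (d - t) → ℝ) : Matrix (Fin (d - t) ⊕ Fin t) (Fin (d - t)) ℝ :=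
  fun i j => fderiv ℝ (graphMap φ) u (Pi.single j 1) i

namespace Matrix

variable {m k : Type*} [Fintype m] [Fintype k] [DecidableEq k]

theorem mul_transpose_mul_of_range_le {R l : Type*} [CommRing R] [Fintype l]
    {Q : Matrix m k R} (hQ : Qᵀ * Q = 1) {N : Matrix m l R}
    (hN : LinearMap.range N.mulVecLin ≤ LinearMap.range Q.mulVecLin) :
    Q * (Qᵀ * N) = N := by
  refine ext_iff_mulVec.2 fun x => ?_
  obtain ⟨c, hc⟩ := hN (LinearMap.mem_range_self N.mulVecLin x)
  rw [← mulVec_mulVec, ← mulVec_mulVec, ← mulVecLin_apply N, ← hc, mulVecLin_apply,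
    mulVec_mulVec c Qᵀ Q, hQ, one_mulVec]

theorem sqrt_det_gram_mul_sqrt_det_gram {p : Type*} [Fintype p] {Q : Matrix m k ℝ}
    (hQ : Qᵀ * Q = 1) (J : Matrix p m ℝ) {N : Matrix m k ℝ} (hN : Q * (Qᵀ * N) = N) :
    Real.sqrt (Qᵀ * Jᵀ * J * Q).det * Real.sqrt (Nᵀ * N).det
      = Real.sqrt ((J * N)ᵀ * (J * N)).det := by
  set C := Qᵀ * N
  have hgramN : Nᵀ * N = Cᵀ * C := by
    conv_lhs => rw [← hN]
    rw [transpose_mul, Matrix.mul_assoc, ← Matrix.mul_assoc Qᵀ, hQ, Matrix.one_mul]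
  have hgramJN : (J * N)ᵀ * (J * N) = Cᵀ * (Qᵀ * Jᵀ * J * Q) * C := by
    conv_lhs => rw [← hN]
    simp only [transpose_mul, Matrix.mul_assoc]
  rw [hgramN, hgramJN, det_mul, det_mul, det_mul, det_transpose, mul_right_comm C.det,
    Real.sqrt_mul (mul_self_nonneg _), mul_comm]

end Matrix

theorem constraintJacobian_eq_toMatrix' {d t : ℕ} (g : ((Fin (d - t) ⊕ Fin t) → ℝ) → (Fin t → ℝ))
    (θ : (Fin (d - t) ⊕ Fin t) → ℝ) :
    constraintJacobian g θ = LinearMap.toMatrix' (fderiv ℝ g θ : _ →ₗ[ℝ] _) := rfl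

theorem graphJacobian_eq_toMatrix' {d t : ℕ} (φ : (Fin (d - t) → ℝ) → (Fin t → ℝ))
    (u : Fin (d - t) → ℝ) :
    graphJacobian φ u = LinearMap.toMatrix' (fderiv ℝ (graphMap φ) u : _ →ₗ[ℝ] _) := rfl

theorem differentiableAt_graphMap {d t : ℕ} {φ : (Fin (d - t) → ℝ) → (Fin t → ℝ)}
    {u : Fin (d - t) → ℝ} (hφ : DifferentiableAt ℝ φ u) :
    DifferentiableAt ℝ (graphMap φ) u := by
  rw [differentiableAt_pi]
  rintro (i | i)
  · exact differentiableAt_apply i u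
  · exact differentiableAt_pi.1 hφ i

theorem constraintJacobian_mul_graphJacobian {d t : ℕ}
    {g : ((Fin (d - t) ⊕ Fin t) → ℝ) → (Fin t → ℝ)} {φ : (Fin (d - t) → ℝ) → (Fin t → ℝ)}
    {u : Fin (d - t) → ℝ} (hg : DifferentiableAt ℝ g (graphMap φ u)) (hφ : DifferentiableAt ℝ φ u)
    (hgφ : g ∘ graphMap φ =ᶠ[nhds u] fun _ => 0) :
    constraintJacobian g (graphMap φ u) * graphJacobian φ u = 0 := by
  rw [constraintJacobian_eq_toMatrix', graphJacobian_eq_toMatrix', ← LinearMap.toMatrix'_comp,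
    ← ContinuousLinearMap.toLinearMap_comp, ← fderiv_comp u hg (differentiableAt_graphMap hφ),
    hgφ.fderiv_eq, fderiv_const_apply, ContinuousLinearMap.toLinearMap_zero, map_zero]

theorem constrained_gfd_eq_reparameterized_gfd_general
    {d t n : ℕ}
    (g : ((Fin (d - t) ⊕ Fin t) → ℝ) → (Fin t → ℝ)) (hg : ContDiff ℝ 1 g)
    (U : Set (Fin (d - t) → ℝ)) (hU : IsOpen U)
    (φ : (Fin (d - t) → ℝ) → (Fin t → ℝ)) (hφ : ContDiffOn ℝ 1 φ U)
    (hgφ : ∀ u ∈ U, g (graphMap φ u) = 0)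
    (f : ((Fin (d - t) ⊕ Fin t) → ℝ) → ℝ)
    (J : ((Fin (d - t) ⊕ Fin t) → ℝ) → Matrix (Fin n) (Fin (d - t) ⊕ Fin t) ℝ)
    (Q : (Fin (d - t) → ℝ) → Matrix (Fin (d - t) ⊕ Fin t) (Fin (d - t)) ℝ)
    (hQorth : ∀ u ∈ U, (Q u)ᵀ * Q u = 1)
    (hQspan : ∀ u ∈ U,
      Submodule.span ℝ (Set.range (fun j : Fin (d - t) => (fun i => Q u i j)))
        = LinearMap.ker (constraintJacobian g (graphMap φ u)).mulVecLin) :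
    (∀ u ∈ U,
      f (graphMap φ u)
          * Real.sqrt (((Q u)ᵀ * (J (graphMap φ u))ᵀ * J (graphMap φ u) * Q u).det)
          * Real.sqrt (((graphJacobian φ u)ᵀ * graphJacobian φ u).det)
        = f (graphMap φ u)
          * Real.sqrt (((J (graphMap φ u) * graphJacobian φ u)ᵀ
              * (J (graphMap φ u) * graphJacobian φ u)).det)) ∧
    (∀ M : Set (Fin (d - t) → ℝ), M ⊆ U → MeasurableSet M →
      ∫ u in M,
          f (graphMap φ u)
            * Real.sqrt (((Q u)ᵀ * (J (graphMap φ u))ᵀ * J (graphMap φ u) * Q u).det)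
            * Real.sqrt (((graphJacobian φ u)ᵀ * graphJacobian φ u).det)
        = ∫ u in M,
            f (graphMap φ u)
              * Real.sqrt (((J (graphMap φ u) * graphJacobian φ u)ᵀ
                  * (J (graphMap φ u) * graphJacobian φ u)).det)) := by
  refine (and_iff_left_of_imp fun pointwise M hMU hM =>
    setIntegral_congr_fun hM fun u hu => pointwise u (hMU hu)).2 fun u hu => ?_
  have hGN : constraintJacobian g (graphMap φ u) * graphJacobian φ u = 0 :=
    constraintJacobian_mul_graphJacobian (hg.differentiable one_ne_zero _)
      ((hφ.differentiableOn one_ne_zero).differentiableAt (hU.mem_nhds hu))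
      (Filter.eventually_of_mem (hU.mem_nhds hu) hgφ)
  have hN : LinearMap.range (graphJacobian φ u).mulVecLin ≤ LinearMap.range (Q u).mulVecLin := by
    rw [(Matrix.range_mulVecLin (Q u)).trans (hQspan u hu), LinearMap.range_le_ker_iff,
      ← Matrix.mulVecLin_mul, hGN, Matrix.mulVecLin_zero]
  rw [mul_assoc, Matrix.sqrt_det_gram_mul_sqrt_det_gram (hQorth u hu) _
    (Matrix.mul_transpose_mul_of_range_le (hQorth u hu) hN)]

/-- paper's Theorem 2, in local coordinates: on the chart given by the
implicit-function graph parameterization of the manifold `g⁻¹({0})`, the unnormalized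
constrained-GFD kernel `f(ι(u))·det(QᵀJᵀJQ)^{1/2}` integrated against the Riemannian
volume element `det(NᵀN)^{1/2} du` coincides, pointwise and hence in integral over any
measurable `M ⊆ U`, with the reparameterized GFD kernel `f(ι(u))·det((JN)ᵀ(JN))^{1/2}`. -/
theorem constrained_gfd_eq_reparameterized_gfd
    {d t n : ℕ} (ht : t ≤ d)
    (g : ((Fin (d - t) ⊕ Fin t) → ℝ) → (Fin t → ℝ)) (hg : ContDiff ℝ 1 g)
    (U : Set (Fin (d - t) → ℝ)) (hU : IsOpen U)
    (φ : (Fin (d - t) → ℝ) → (Fin t → ℝ)) (hφ : ContDiffOn ℝ 1 φ U)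
    (hgφ : ∀ u ∈ U, g (graphMap φ u) = 0)
    (hinv : ∀ u ∈ U,
      IsUnit ((constraintJacobian g (graphMap φ u)).submatrix id Sum.inr))
    (f : ((Fin (d - t) ⊕ Fin t) → ℝ) → ℝ)
    (hfmeas : Measurable f) (hf0 : ∀ θ, 0 ≤ f θ)
    (J : ((Fin (d - t) ⊕ Fin t) → ℝ) → Matrix (Fin n) (Fin (d - t) ⊕ Fin t) ℝ)
    (Q : (Fin (d - t) → ℝ) → Matrix (Fin (d - t) ⊕ Fin t) (Fin (d - t)) ℝ)
    (hQorth : ∀ u ∈ U, (Q u)ᵀ * Q u = 1)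
    (hQspan : ∀ u ∈ U,
      Submodule.span ℝ (Set.range (fun j : Fin (d - t) => (fun i => Q u i j)))
        = LinearMap.ker (constraintJacobian g (graphMap φ u)).mulVecLin) :
    (∀ u ∈ U,
      f (graphMap φ u)
          * Real.sqrt (((Q u)ᵀ * (J (graphMap φ u))ᵀ * J (graphMap φ u) * Q u).det)
          * Real.sqrt (((graphJacobian φ u)ᵀ * graphJacobian φ u).det)
        = f (graphMap φ u)
          * Real.sqrt (((J (graphMap φ u) * graphJacobian φ u)ᵀ
              * (J (graphMap φ u) * graphJacobian φ u)).det)) ∧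
    (∀ M : Set (Fin (d - t) → ℝ), M ⊆ U → MeasurableSet M →
      ∫ u in M,
          f (graphMap φ u)
            * Real.sqrt (((Q u)ᵀ * (J (graphMap φ u))ᵀ * J (graphMap φ u) * Q u).det)
            * Real.sqrt (((graphJacobian φ u)ᵀ * graphJacobian φ u).det)
        = ∫ u in M,
            f (graphMap φ u)
              * Real.sqrt (((J (graphMap φ u) * graphJacobian φ u)ᵀ
                  * (J (graphMap φ u) * graphJacobian φ u)).det)) :=
  constrained_gfd_eq_reparameterized_gfd_general g hg U hU φ hφ hgφ f J Q hQorth hQspan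
end

section
/- Let A be a real skew-symmetric n×n matrix (so that I + A and I − A are invertible), let Λ be a real diagonal n×n matrix, fix indices q ≠ r, and set E := E^{q,r} − E^{r,q}, where E^{i,j} is the matrix with a one in entry (i,j) and zeros elsewhere. Define Σ(X) := (I − X)·(I + X)⁻¹·Λ²·(I − X)⁻¹·(I + X) for X in a neighborhood of A on which I ± X are invertible. Then the map s ↦ Σ(A + s·E) is differentiable at s = 0 with derivative 2·(B + Bᵀ), where B := (I + A)⁻¹·(E^{r,q} − E^{q,r})·(I + A)⁻¹·Λ²·(I − A)⁻¹·(I + A). -/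
/-!
With `Y = A + s • E`, both factors `(1 - Y) * (1 + Y)⁻¹` and `(1 - Y)⁻¹ * (1 + Y)` of `Σ` have
derivative `∓ 2 • M⁻¹ * E * M⁻¹` (`M = 1 ± A`), because `(1 + A) + (1 - A) = 2`. In the product
rule the first factor contributes `2 • B`; transposing `B` with `Aᵀ = -A`, `Eᵀ = -E` and
`Λ²` diagonal shows that the second contributes `2 • Bᵀ`. Both `1 ± A` are invertible since
`(1 - A) * (1 + A) = 1 + Aᵀ * A` is positive definite.
-/

open Matrix

attribute [local instance] Matrix.frobeniusNormedRing Matrix.frobeniusNormedAlgebra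

theorem hasDerivAt_add_smul {𝕜 F : Type*} [NontriviallyNormedField 𝕜] [NormedAddCommGroup F]
    [NormedSpace 𝕜 F] (a e : F) : HasDerivAt (fun s : 𝕜 => a + s • e) e 0 := by
  simpa using ((hasDerivAt_id (0 : 𝕜)).smul_const e).const_add a

theorem hasDerivAt_ringInverse_add_smul {𝕜 R : Type*} [NontriviallyNormedField 𝕜] [NormedRing R]
    [HasSummableGeomSeries R] [NormedAlgebra 𝕜 R] (u : Rˣ) (e : R) :
    HasDerivAt (fun s : 𝕜 => Ring.inverse (↑u + s • e)) (-(↑u⁻¹ * e * ↑u⁻¹)) 0 :=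
  (hasFDerivAt_ringInverse u).comp_hasDerivAt_of_eq 0 (hasDerivAt_add_smul (u : R) e) (by simp)

namespace Matrix

variable {m 𝕜 : Type*} [Fintype m] [DecidableEq m] [RCLike 𝕜]

theorem hasDerivAt_inv_add_smul {M : Matrix m m 𝕜} (hM : IsUnit M) (E : Matrix m m 𝕜) :
    HasDerivAt (fun s : 𝕜 => (M + s • E)⁻¹) (-(M⁻¹ * E * M⁻¹)) 0 := by
  obtain ⟨u, rfl⟩ := hM
  simp only [nonsing_inv_eq_ringInverse, Ring.inverse_unit]
  exact hasDerivAt_ringInverse_add_smul u E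

theorem hasDerivAt_one_sub_mul_one_add_inv {X : Matrix m m 𝕜} (hX : IsUnit (1 + X))
    (E : Matrix m m 𝕜) :
    HasDerivAt (fun s : 𝕜 => (1 - (X + s • E)) * (1 + (X + s • E))⁻¹)
      (-(2 : 𝕜) • ((1 + X)⁻¹ * E * (1 + X)⁻¹)) 0 := by
  have hnum : HasDerivAt (fun s : 𝕜 => (1 - X) + s • -E) (-E) 0 := hasDerivAt_add_smul _ _
  have hden := hasDerivAt_inv_add_smul hX E
  have hXX : (1 + X) * (1 + X)⁻¹ = 1 := mul_nonsing_inv _ ((isUnit_iff_isUnit_det _).1 hX)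
  refine ((hnum.mul hden).congr_deriv ?_).congr_of_eventuallyEq (.of_forall fun s => ?_)
  · set Q := (1 + X)⁻¹ * E * (1 + X)⁻¹
    have hEQ : E * (1 + X)⁻¹ = (1 + X) * Q := by simp only [Q, ← mul_assoc, hXX, one_mul]
    simp only [zero_smul, add_zero, neg_mul, hEQ, neg_smul, two_smul]
    noncomm_ring
  · simp only [Pi.mul_apply, smul_neg, ← sub_eq_add_neg, sub_sub, add_assoc]

theorem hasDerivAt_one_sub_inv_mul_one_add {X : Matrix m m 𝕜} (hX : IsUnit (1 - X))
    (E : Matrix m m 𝕜) :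
    HasDerivAt (fun s : 𝕜 => (1 - (X + s • E))⁻¹ * (1 + (X + s • E)))
      ((2 : 𝕜) • ((1 - X)⁻¹ * E * (1 - X)⁻¹)) 0 := by
  have hinv := hasDerivAt_inv_add_smul hX (-E)
  have hnum : HasDerivAt (fun s : 𝕜 => (1 + X) + s • E) E 0 := hasDerivAt_add_smul _ _
  have hXX : (1 - X)⁻¹ * (1 - X) = 1 := nonsing_inv_mul _ ((isUnit_iff_isUnit_det _).1 hX)
  refine ((hinv.mul hnum).congr_deriv ?_).congr_of_eventuallyEq (.of_forall fun s => ?_)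
  · set Q := (1 - X)⁻¹ * E * (1 - X)⁻¹
    have hEQ : (1 - X)⁻¹ * E = Q * (1 - X) := by simp only [Q, mul_assoc, hXX, mul_one]
    have hQ : -((1 - X)⁻¹ * -E * (1 - X)⁻¹) = Q := by simp only [Q, mul_neg, neg_mul, neg_neg]
    simp only [zero_smul, add_zero, hQ, hEQ, two_smul]
    noncomm_ring
  · simp only [Pi.mul_apply, smul_neg, ← sub_eq_add_neg, sub_sub, add_assoc]

theorem isUnit_one_add_of_transpose_eq_neg {A : Matrix m m ℝ} (hA : Aᵀ = -A) :
    IsUnit (1 + A) := by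
  have hpos : (1 + Aᴴ * A).PosDef :=
    PosDef.one.add_posSemidef (posSemidef_conjTranspose_mul_self A)
  have hprod : (1 - A) * (1 + A) = 1 + Aᴴ * A := by
    rw [conjTranspose_eq_transpose_of_trivial, hA]
    noncomm_ring
  have hdet := hpos.isUnit
  rw [← hprod, isUnit_iff_isUnit_det, det_mul] at hdet
  exact (isUnit_iff_isUnit_det _).2 (isUnit_of_mul_isUnit_right hdet)

end Matrix

theorem ar1_sigma_deriv_skew_general
    {n : ℕ} (A : Matrix (Fin n) (Fin n) ℝ) (hA : Aᵀ = -A)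
    (l : Fin n → ℝ) (q r : Fin n)
    (E : Matrix (Fin n) (Fin n) ℝ)
    (hE : E = Matrix.single q r 1 - Matrix.single r q 1)
    (B : Matrix (Fin n) (Fin n) ℝ)
    (hB : B = (1 + A)⁻¹ * (Matrix.single r q 1 - Matrix.single q r 1)
      * (1 + A)⁻¹ * (Matrix.diagonal l) ^ 2 * (1 - A)⁻¹ * (1 + A)) :
    HasDerivAt
      (fun s : ℝ =>
        (1 - (A + s • E)) * (1 + (A + s • E))⁻¹ * (Matrix.diagonal l) ^ 2
          * (1 - (A + s • E))⁻¹ * (1 + (A + s • E)))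
      ((2 : ℝ) • (B + Bᵀ))
      0 := by
  have hU : IsUnit (1 + A) := isUnit_one_add_of_transpose_eq_neg hA
  have hV : IsUnit (1 - A) := by
    simpa [sub_eq_add_neg] using
      isUnit_one_add_of_transpose_eq_neg (A := -A) (by rw [transpose_neg, hA])
  have hEt : Eᵀ = -E := by rw [hE, transpose_sub, transpose_single, transpose_single, neg_sub]
  have hB' : B = -((1 + A)⁻¹ * E * (1 + A)⁻¹ * diagonal l ^ 2 * (1 - A)⁻¹ * (1 + A)) := by
    rw [hB, hE, ← neg_sub]
    noncomm_ring
  have hBt : Bᵀ = (1 - A) * (1 + A)⁻¹ * diagonal l ^ 2 * ((1 - A)⁻¹ * E * (1 - A)⁻¹) := by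
    simp only [hB', transpose_neg, transpose_mul, transpose_nonsing_inv, transpose_add,
      transpose_sub, transpose_one, hA, hEt, transpose_pow, diagonal_transpose,
      ← sub_eq_add_neg, sub_neg_eq_add, mul_neg, neg_mul, neg_neg, mul_assoc]
  have hprod := ((hasDerivAt_one_sub_mul_one_add_inv hU E).mul_const (diagonal l ^ 2)).mul
    (hasDerivAt_one_sub_inv_mul_one_add hV E)
  refine (hprod.congr_deriv ?_).congr_of_eventuallyEq (.of_forall fun s => ?_)
  · rw [hBt, hB', zero_smul, add_zero]
    simp only [smul_add, neg_smul, smul_mul_assoc, mul_smul_comm, smul_neg, neg_mul, mul_assoc]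
  · simp only [Pi.mul_apply, mul_assoc]

/-- paper's AR(1) example, `∂Σ/∂A_{q,r}`: with `A` skew-symmetric,
`Λ = diagonal l`, `q ≠ r`, `E = E^{q,r} − E^{r,q}`, and
`Σ(X) = (I−X)(I+X)⁻¹ Λ² (I−X)⁻¹(I+X)`, the map `s ↦ Σ(A + s·E)` is differentiable at
`s = 0` with derivative `2(B + Bᵀ)`, where
`B = (I+A)⁻¹ (E^{r,q} − E^{q,r}) (I+A)⁻¹ Λ² (I−A)⁻¹ (I+A)`. -/
theorem ar1_sigma_deriv_skew
    {n : ℕ} (A : Matrix (Fin n) (Fin n) ℝ) (hA : Aᵀ = -A)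
    (l : Fin n → ℝ) (q r : Fin n) (hqr : q ≠ r)
    (E : Matrix (Fin n) (Fin n) ℝ)
    (hE : E = Matrix.single q r 1 - Matrix.single r q 1)
    (B : Matrix (Fin n) (Fin n) ℝ)
    (hB : B = (1 + A)⁻¹ * (Matrix.single r q 1 - Matrix.single q r 1)
      * (1 + A)⁻¹ * (Matrix.diagonal l) ^ 2 * (1 - A)⁻¹ * (1 + A)) :
    HasDerivAt
      (fun s : ℝ =>
        (1 - (A + s • E)) * (1 + (A + s • E))⁻¹ * (Matrix.diagonal l) ^ 2
          * (1 - (A + s • E))⁻¹ * (1 + (A + s • E)))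
      ((2 : ℝ) • (B + Bᵀ))
      0 :=
  ar1_sigma_deriv_skew_general A hA l q r E hE B hB
end
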